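/- arXiv:1707.03575 — 3 statements merged into one kernel-verified Lean document; each statement's English description precedes it below -/
import Mathlib

section
/- Fix x* > 0 and let u : [0,x*] → ℝ be continuous. The pair (Υ^u, p^u) verifies the dimensionless moving boundary conditions of the 1D RTM model with inlet pressure 2 and initial/outlet pressure 1: for every t with 0 < t < τ*_u one has (i) p^u(0,t) = 2, (ii) p^u(Υ^u(t), t) = 1, (iii) p^u(x,t) = 1 for all x with Υ^u(t) < x ≤ x*, (iv) Υ^u(0) = 0, and (v) the Stefan condition holds: the derivative of Υ^u at t plus exp(u(Υ^u(t))) times the one-sided spatial derivative of x ↦ p^u(x,t) at x = Υ^u(t) taken from within [0, Υ^u(t)] equals 0; explicitly, dΥ^u/dt(t) = 1/F_u(Υ^u(t)) and the one-sided spatial derivative equals −exp(−u(Υ^u(t)))/F_u(Υ^u(t)). -/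
/-!
The front `Υ` inverts the filling function `W_u`, which is strictly increasing on `[0, x*]`
because `W_u' = F_u > 0` there. Being monotone with an interval as image, `Υ` is continuous, so
the inverse function theorem gives `Υ' = 1 / W_u'(Υ) = 1 / F_u(Υ)`. Behind the front the pressure
is `2 - F_u / F_u(Υ)` with `F_u' = exp(-u)`, and the Stefan condition reduces to
`exp u * exp (-u) = 1`.
-/

open Set Filter

noncomputable def Fu (xs : ℝ) (h : 0 ≤ xs) (u : C(Icc (0:ℝ) xs, ℝ)) (x : ℝ) : ℝ :=
  ∫ z in (0:ℝ)..x, Real.exp (-(u (projIcc 0 xs h z)))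

noncomputable def Wu (xs : ℝ) (h : 0 ≤ xs) (u : C(Icc (0:ℝ) xs, ℝ)) (x : ℝ) : ℝ :=
  ∫ ξ in (0:ℝ)..x, Fu xs h u ξ

noncomputable def tau (xs : ℝ) (h : 0 ≤ xs) (u : C(Icc (0:ℝ) xs, ℝ)) : ℝ :=
  Wu xs h u xs


/-- Dimensionless pressure, given the moving front `Υ`:
`p(x,t) = 2 - F_u(x)/F_u(Υ(t))` behind the front (`x ≤ Υ t`) and `1` ahead of it. -/
noncomputable def press (xs : ℝ) (h : 0 ≤ xs) (u : C(Icc (0:ℝ) xs, ℝ)) (Υ : ℝ → ℝ)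
    (x t : ℝ) : ℝ :=
  if x ≤ Υ t then 2 - Fu xs h u x / Fu xs h u (Υ t) else 1

section RightInverse

variable {α β : Type*} [LinearOrder α] [LinearOrder β] {f : α → β} {g : β → α} {a b : α}

theorem StrictMonoOn.surjOn_of_rightInvOn (hf : StrictMonoOn f (Icc a b))
    (hg : MapsTo g (Icc (f a) (f b)) (Icc a b)) (hfg : RightInvOn g f (Icc (f a) (f b))) :
    SurjOn g (Icc (f a) (f b)) (Icc a b) :=
  (hf.injOn.rightInvOn_of_leftInvOn hfg hf.monotoneOn.mapsTo_Icc hg).surjOn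
    hf.monotoneOn.mapsTo_Icc

theorem StrictMonoOn.monotoneOn_of_rightInvOn (hf : StrictMonoOn f (Icc a b))
    (hg : MapsTo g (Icc (f a) (f b)) (Icc a b)) (hfg : RightInvOn g f (Icc (f a) (f b))) :
    MonotoneOn g (Icc (f a) (f b)) := fun y hy y' hy' hyy' => by
  rwa [← hf.le_iff_le (hg hy) (hg hy'), hfg hy, hfg hy']

theorem Set.RightInvOn.apply_mem_Ioo (hfg : RightInvOn g f (Icc (f a) (f b)))
    (hg : MapsTo g (Icc (f a) (f b)) (Icc a b)) {y : β} (hy : y ∈ Ioo (f a) (f b)) :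
    g y ∈ Ioo a b := by
  have hgy := hg (Ioo_subset_Icc_self hy)
  have hfgy := hfg (Ioo_subset_Icc_self hy)
  refine ⟨hgy.1.lt_of_ne ?_, hgy.2.lt_of_ne ?_⟩ <;> rintro heq
  · exact hy.1.ne' (by rw [heq, hfgy])
  · exact hy.2.ne (by rw [← heq, hfgy])

theorem StrictMonoOn.continuousAt_of_rightInvOn [TopologicalSpace α] [OrderTopology α]
    [TopologicalSpace β] [OrderTopology β] [DenselyOrdered α]
    (hf : StrictMonoOn f (Icc a b)) (hg : MapsTo g (Icc (f a) (f b)) (Icc a b))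
    (hfg : RightInvOn g f (Icc (f a) (f b))) {y : β} (hy : y ∈ Ioo (f a) (f b)) :
    ContinuousAt g y := by
  obtain ⟨hay, hyb⟩ := hfg.apply_mem_Ioo hg hy
  exact continuousAt_of_monotoneOn_of_image_mem_nhds (hf.monotoneOn_of_rightInvOn hg hfg)
    (Icc_mem_nhds hy.1 hy.2)
    (mem_of_superset (Icc_mem_nhds hay hyb) (hf.surjOn_of_rightInvOn hg hfg))

theorem StrictMonoOn.hasDerivAt_of_rightInvOn {f g : ℝ → ℝ} {a b : ℝ}
    (hf : StrictMonoOn f (Icc a b)) (hg : MapsTo g (Icc (f a) (f b)) (Icc a b))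
    (hfg : RightInvOn g f (Icc (f a) (f b))) {y f' : ℝ} (hy : y ∈ Ioo (f a) (f b))
    (hf' : HasDerivAt f f' (g y)) (hf'0 : f' ≠ 0) :
    HasDerivAt g f'⁻¹ y :=
  hf'.of_local_left_inverse (hf.continuousAt_of_rightInvOn hg hfg hy) hf'0 <|
    eventually_of_mem (Icc_mem_nhds hy.1 hy.2) hfg

end RightInverse

section Filling

variable (xs : ℝ) (h : 0 ≤ xs) (u : C(Icc (0:ℝ) xs, ℝ))

theorem Fu_hasDerivAt (x : ℝ) :
    HasDerivAt (Fu xs h u) (Real.exp (-(u (projIcc 0 xs h x)))) x :=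
  ((Real.continuous_exp.comp (u.continuous.comp continuous_projIcc).neg).integral_hasStrictDerivAt
    0 x).hasDerivAt

theorem Fu_zero : Fu xs h u 0 = 0 := intervalIntegral.integral_same

theorem Fu_pos {x : ℝ} (hx : 0 < x) : 0 < Fu xs h u x := by
  simpa [Fu_zero] using
    strictMono_of_hasDerivAt_pos (Fu_hasDerivAt xs h u) (fun _ => Real.exp_pos _) hx

theorem Wu_hasDerivAt (x : ℝ) : HasDerivAt (Wu xs h u) (Fu xs h u x) x :=
  ((continuous_iff_continuousAt.mpr fun x => (Fu_hasDerivAt xs h u x).continuousAt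
    ).integral_hasStrictDerivAt 0 x).hasDerivAt

theorem Wu_zero : Wu xs h u 0 = 0 := intervalIntegral.integral_same

theorem Wu_strictMonoOn : StrictMonoOn (Wu xs h u) (Icc 0 xs) :=
  strictMonoOn_of_deriv_pos (convex_Icc 0 xs)
    (fun x _ => (Wu_hasDerivAt xs h u x).continuousAt.continuousWithinAt)
    fun x hx => by
      rw [interior_Icc] at hx
      rw [(Wu_hasDerivAt xs h u x).deriv]
      exact Fu_pos xs h u hx.1

end Filling

/-- the pair `(Υ^u, p^u)` satisfies the dimensionless moving boundary
conditions with inlet pressure 2 and initial/outlet pressure 1, including the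
Stefan condition at the front. -/
theorem stmt_3 (xs : ℝ) (hxs : 0 < xs) (u : C(Icc (0:ℝ) xs, ℝ)) (Υ : ℝ → ℝ)
    (hΥ : ∀ s ∈ Icc (0:ℝ) (tau xs hxs.le u), Υ s ∈ Icc 0 xs ∧ Wu xs hxs.le u (Υ s) = s)
    (t : ℝ) (ht0 : 0 < t) (htτ : t < tau xs hxs.le u) :
    press xs hxs.le u Υ 0 t = 2 ∧
    press xs hxs.le u Υ (Υ t) t = 1 ∧
    (∀ x : ℝ, Υ t < x → x ≤ xs → press xs hxs.le u Υ x t = 1) ∧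
    Υ 0 = 0 ∧
    HasDerivAt Υ (1 / Fu xs hxs.le u (Υ t)) t ∧
    HasDerivWithinAt (fun x => press xs hxs.le u Υ x t)
      (-Real.exp (-(u (projIcc 0 xs hxs.le (Υ t)))) / Fu xs hxs.le u (Υ t))
      (Icc 0 (Υ t)) (Υ t) ∧
    1 / Fu xs hxs.le u (Υ t) +
        Real.exp (u (projIcc 0 xs hxs.le (Υ t))) *
          (-Real.exp (-(u (projIcc 0 xs hxs.le (Υ t)))) / Fu xs hxs.le u (Υ t)) = 0 := by
  have hW := Wu_strictMonoOn xs hxs.le u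
  have hrange : Icc (Wu xs hxs.le u 0) (Wu xs hxs.le u xs) = Icc 0 (tau xs hxs.le u) := by
    rw [Wu_zero, tau]
  have hmaps : MapsTo Υ (Icc (Wu xs hxs.le u 0) (Wu xs hxs.le u xs)) (Icc 0 xs) :=
    fun s hs => (hΥ s (hrange ▸ hs)).1
  have hinv : RightInvOn Υ (Wu xs hxs.le u) (Icc (Wu xs hxs.le u 0) (Wu xs hxs.le u xs)) :=
    fun s hs => (hΥ s (hrange ▸ hs)).2
  have ht : t ∈ Ioo (Wu xs hxs.le u 0) (Wu xs hxs.le u xs) := by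
    rw [Wu_zero, ← tau]; exact ⟨ht0, htτ⟩
  have hfront : 0 < Υ t := (hinv.apply_mem_Ioo hmaps ht).1
  have hF : 0 < Fu xs hxs.le u (Υ t) := Fu_pos xs hxs.le u hfront
  refine ⟨?_, ?_, fun x hx _ => if_neg (not_le.mpr hx), ?_, ?_, ?_, ?_⟩
  · simp [press, hfront.le, Fu_zero]
  · rw [press, if_pos le_rfl, div_self hF.ne']
    norm_num
  · have h0 : (0 : ℝ) ∈ Icc (Wu xs hxs.le u 0) (Wu xs hxs.le u xs) := by
      rw [hrange]; exact ⟨le_rfl, (ht0.trans htτ).le⟩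
    exact hW.injOn (hmaps h0) ⟨le_rfl, hxs.le⟩ (by rw [hinv h0, Wu_zero])
  · rw [one_div]
    exact hW.hasDerivAt_of_rightInvOn hmaps hinv ht (Wu_hasDerivAt xs hxs.le u _) hF.ne'
  · rw [neg_div]
    exact (((Fu_hasDerivAt xs hxs.le u _).div_const _).const_sub 2).hasDerivWithinAt.congr
      (fun x hx => if_pos hx.2) (if_pos le_rfl)
  · rw [Real.exp_neg]
    field_simp
    ring
end

section
/- Fix x* > 0 and let u : [0,x*] → ℝ be continuous. Then for every t with 0 < t ≤ τ*_u, F_u(Υ^u(t)) ≥ (t/x*)·exp(−2‖u‖); equivalently, 1/F_u(Υ^u(t)) ≤ (x*/t)·exp(2‖u‖). In particular, for any t₁ > 0 and all t ∈ [t₁, τ*_u], 1/F_u(Υ^u(t)) ≤ (x*/t₁)·exp(2‖u‖). -/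
open Set

/-! Since `F_u` is increasing, `W_u(x) = ∫₀ˣ F_u ≤ x F_u(x) ≤ x* F_u(x)` for `x ∈ [0, x*]`.
At `x = Υ(t)` this gives `F_u(Υ(t)) ≥ t / x*`, which is stronger than the claimed bounds
because `exp(-2‖u‖) ≤ 1 ≤ exp(2‖u‖)`. -/

theorem monotone_primitive_of_nonneg {f : ℝ → ℝ}
    (hf : ∀ a b, IntervalIntegrable f MeasureTheory.volume a b) (hf0 : ∀ x, 0 ≤ f x) (c : ℝ) :
    Monotone fun x => ∫ z in c..x, f z := by
  intro a b hab
  have hsplit := intervalIntegral.integral_add_adjacent_intervals (hf c a) (hf a b)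
  have hnonneg : 0 ≤ ∫ z in a..b, f z := intervalIntegral.integral_nonneg hab fun z _ => hf0 z
  dsimp only
  linarith

theorem integral_le_mul_of_monotoneOn {F : ℝ → ℝ} {x : ℝ} (hx : 0 ≤ x)
    (hF : MonotoneOn F (Icc 0 x)) : ∫ ξ in (0:ℝ)..x, F ξ ≤ x * F x := by
  have hxmem : x ∈ Icc 0 x := ⟨hx, le_rfl⟩
  have hF' : MonotoneOn F (uIcc 0 x) := by rwa [uIcc_of_le hx]
  calc ∫ ξ in (0:ℝ)..x, F ξ ≤ ∫ _ in (0:ℝ)..x, F x :=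
        intervalIntegral.integral_mono_on hx hF'.intervalIntegrable
          intervalIntegrable_const fun ξ hξ => hF hξ hxmem hξ.2
    _ = x * F x := by simp

section
variable {xs : ℝ} (h : 0 ≤ xs) (u : C(Icc (0:ℝ) xs, ℝ))

theorem Fu_monotone : Monotone (Fu xs h u) := by
  have hcont : Continuous fun z => Real.exp (-(u (projIcc 0 xs h z))) := by fun_prop
  exact monotone_primitive_of_nonneg (fun _ _ => hcont.intervalIntegrable _ _)
    (fun _ => (Real.exp_pos _).le) 0

theorem Wu_le_mul_Fu {x : ℝ} (hx : 0 ≤ x) : Wu xs h u x ≤ x * Fu xs h u x :=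
  integral_le_mul_of_monotoneOn hx ((Fu_monotone h u).monotoneOn _)

theorem Wu_div_le_Fu (hxs : 0 < xs) {x : ℝ} (hx : x ∈ Icc 0 xs) :
    Wu xs hxs.le u x / xs ≤ Fu xs hxs.le u x := by
  have hF0 : 0 ≤ Fu xs hxs.le u x := by
    simpa [Fu] using Fu_monotone hxs.le u hx.1
  rw [div_le_iff₀ hxs]
  calc Wu xs hxs.le u x ≤ x * Fu xs hxs.le u x := Wu_le_mul_Fu hxs.le u hx.1
    _ ≤ Fu xs hxs.le u x * xs := by nlinarith [hx.2]

end

/-- for `0 < t ≤ τ*_u`, `F_u(Υ^u(t)) ≥ (t/x*)·exp(-2‖u‖)`, equivalently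
`1/F_u(Υ^u(t)) ≤ (x*/t)·exp(2‖u‖)`; in particular for any `t₁ > 0` and all
`t ∈ [t₁, τ*_u]`, `1/F_u(Υ^u(t)) ≤ (x*/t₁)·exp(2‖u‖)`. -/
theorem stmt_6 (xs : ℝ) (hxs : 0 < xs) (u : C(Icc (0:ℝ) xs, ℝ)) (Υ : ℝ → ℝ)
    (hΥ : ∀ s ∈ Icc (0:ℝ) (tau xs hxs.le u), Υ s ∈ Icc 0 xs ∧ Wu xs hxs.le u (Υ s) = s) :
    (∀ t : ℝ, 0 < t → t ≤ tau xs hxs.le u →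
      t / xs * Real.exp (-(2 * ‖u‖)) ≤ Fu xs hxs.le u (Υ t) ∧
      1 / Fu xs hxs.le u (Υ t) ≤ xs / t * Real.exp (2 * ‖u‖)) ∧
    ∀ t₁ : ℝ, 0 < t₁ → ∀ t ∈ Icc t₁ (tau xs hxs.le u),
      1 / Fu xs hxs.le u (Υ t) ≤ xs / t₁ * Real.exp (2 * ‖u‖) := by
  have hexp_neg : Real.exp (-(2 * ‖u‖)) ≤ 1 :=
    Real.exp_le_one_iff.mpr (neg_nonpos.mpr (by positivity))
  have hexp_pos : 1 ≤ Real.exp (2 * ‖u‖) := Real.one_le_exp (by positivity)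
  have hbound : ∀ t : ℝ, 0 < t → t ≤ tau xs hxs.le u →
      t / xs * Real.exp (-(2 * ‖u‖)) ≤ Fu xs hxs.le u (Υ t) ∧
      1 / Fu xs hxs.le u (Υ t) ≤ xs / t * Real.exp (2 * ‖u‖) := by
    intro t ht htτ
    obtain ⟨hmem, hW⟩ := hΥ t ⟨ht.le, htτ⟩
    have hF : t / xs ≤ Fu xs hxs.le u (Υ t) := by
      simpa only [hW] using Wu_div_le_Fu u hxs hmem
    have htxs : 0 < t / xs := div_pos ht hxs
    refine ⟨le_trans (mul_le_of_le_one_right htxs.le hexp_neg) hF, ?_⟩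
    calc 1 / Fu xs hxs.le u (Υ t) ≤ 1 / (t / xs) := one_div_le_one_div_of_le htxs hF
      _ = xs / t := one_div_div _ _
      _ ≤ xs / t * Real.exp (2 * ‖u‖) := le_mul_of_one_le_right (by positivity) hexp_pos
  refine ⟨hbound, fun t₁ ht₁ t ⟨ht₁t, htτ⟩ => ?_⟩
  refine (hbound t (ht₁.trans_le ht₁t) htτ).2.trans ?_
  gcongr
end

section
/- Fix x* > 0 and let u, v : [0,x*] → ℝ be continuous. Then for every t ∈ [0, min(τ*_u, τ*_v)], |F_u(Υ^u(t)) − F_v(Υ^v(t))| ≤ M_{u,v}·( x*·‖u − v‖ + |Υ^u(t) − Υ^v(t)| ), where M_{u,v} = exp(max(‖u‖,‖v‖)). -/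
open Set

/-! `F_u` is Lipschitz in `x` with constant `exp ‖u‖`, and `‖F_u - F_v‖` on `[0, x]` is at most
`x · exp (max ‖u‖ ‖v‖) · ‖u - v‖` since `exp` is `exp c`-Lipschitz on `(-∞, c]`. The theorem follows
from the triangle inequality through `F_v (Υ^u t)`, using `Υ^u t ∈ [0, x*]`. -/

lemma Real.abs_exp_sub_exp_le_of_le {a b c : ℝ} (ha : a ≤ c) (hb : b ≤ c) :
    |Real.exp a - Real.exp b| ≤ Real.exp c * |a - b| := by
  wlog hab : a ≤ b generalizing a b
  · rw [abs_sub_comm, abs_sub_comm a b]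
    exact this hb ha (le_of_not_ge hab)
  -- `exp b - exp a = exp b * (1 - exp (a - b)) ≤ exp b * (b - a)`
  have h_one_sub : 1 - Real.exp (a - b) ≤ b - a := by linarith [Real.add_one_le_exp (a - b)]
  have h_split : Real.exp a = Real.exp (a - b) * Real.exp b := by rw [← Real.exp_add, sub_add_cancel]
  rw [abs_of_nonpos (by simpa using hab), abs_of_nonpos (sub_nonpos.2 hab)]
  nlinarith [Real.exp_pos b, Real.exp_le_exp.2 hb]

section ContinuousMap

variable {α : Type*} [TopologicalSpace α] [CompactSpace α]

lemma ContinuousMap.neg_apply_le_norm (u : C(α, ℝ)) (y : α) : -u y ≤ ‖u‖ :=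
  (neg_le_abs _).trans (u.norm_coe_le_norm y)

lemma ContinuousMap.exp_neg_apply_le (u : C(α, ℝ)) (y : α) :
    Real.exp (-u y) ≤ Real.exp ‖u‖ :=
  Real.exp_le_exp.2 (u.neg_apply_le_norm y)

lemma ContinuousMap.abs_exp_neg_apply_sub_le (u v : C(α, ℝ)) (y : α) :
    |Real.exp (-u y) - Real.exp (-v y)| ≤ Real.exp (max ‖u‖ ‖v‖) * ‖u - v‖ := by
  calc |Real.exp (-u y) - Real.exp (-v y)|
      ≤ Real.exp (max ‖u‖ ‖v‖) * |-u y - -v y| :=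
        Real.abs_exp_sub_exp_le_of_le ((u.neg_apply_le_norm y).trans (le_max_left _ _))
          ((v.neg_apply_le_norm y).trans (le_max_right _ _))
    _ ≤ Real.exp (max ‖u‖ ‖v‖) * ‖u - v‖ := by
        gcongr
        rw [neg_sub_neg, abs_sub_comm]
        exact (u - v).norm_coe_le_norm y

end ContinuousMap

section Fu

variable {xs : ℝ} (h : 0 ≤ xs)

lemma continuous_exp_neg_comp_projIcc (u : C(Icc (0:ℝ) xs, ℝ)) :
    Continuous fun z => Real.exp (-u (projIcc 0 xs h z)) := by
  fun_prop

lemma Fu_sub_Fu (u v : C(Icc (0:ℝ) xs, ℝ)) (x : ℝ) :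
    Fu xs h u x - Fu xs h v x =
      ∫ z in (0:ℝ)..x, (Real.exp (-u (projIcc 0 xs h z)) - Real.exp (-v (projIcc 0 xs h z))) :=
  (intervalIntegral.integral_sub ((continuous_exp_neg_comp_projIcc h u).intervalIntegrable _ _)
    ((continuous_exp_neg_comp_projIcc h v).intervalIntegrable _ _)).symm

lemma abs_Fu_sub_Fu_le (u v : C(Icc (0:ℝ) xs, ℝ)) (x : ℝ) :
    |Fu xs h u x - Fu xs h v x| ≤ Real.exp (max ‖u‖ ‖v‖) * ‖u - v‖ * |x| := by
  have hbound (z : ℝ) :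
      ‖Real.exp (-u (projIcc 0 xs h z)) - Real.exp (-v (projIcc 0 xs h z))‖ ≤
        Real.exp (max ‖u‖ ‖v‖) * ‖u - v‖ :=
    u.abs_exp_neg_apply_sub_le v _
  simpa only [Fu_sub_Fu, sub_zero, Real.norm_eq_abs] using
    intervalIntegral.norm_integral_le_of_norm_le_const (a := 0) (b := x) fun z _ => hbound z

lemma abs_Fu_sub_Fu_le_mul_abs_sub (u : C(Icc (0:ℝ) xs, ℝ)) (a b : ℝ) :
    |Fu xs h u a - Fu xs h u b| ≤ Real.exp ‖u‖ * |a - b| := by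
  have hint := (continuous_exp_neg_comp_projIcc h u).intervalIntegrable (μ := MeasureTheory.volume)
  have hbound (z : ℝ) : ‖Real.exp (-u (projIcc 0 xs h z))‖ ≤ Real.exp ‖u‖ := by
    rw [Real.norm_of_nonneg (Real.exp_pos _).le]
    exact u.exp_neg_apply_le _
  rw [Fu, Fu, intervalIntegral.integral_interval_sub_left (hint _ _) (hint _ _), ← Real.norm_eq_abs]
  exact intervalIntegral.norm_integral_le_of_norm_le_const fun z _ => hbound z

end Fu

theorem stmt_9_general (xs : ℝ) (hxs : 0 < xs) (u v : C(Icc (0:ℝ) xs, ℝ)) (Υu Υv : ℝ → ℝ)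
    (hΥu : ∀ s ∈ Icc (0:ℝ) (tau xs hxs.le u), Υu s ∈ Icc 0 xs ∧ Wu xs hxs.le u (Υu s) = s)
    (t : ℝ) (ht : t ∈ Icc (0:ℝ) (min (tau xs hxs.le u) (tau xs hxs.le v))) :
    |Fu xs hxs.le u (Υu t) - Fu xs hxs.le v (Υv t)| ≤
      Real.exp (max ‖u‖ ‖v‖) * (xs * ‖u - v‖ + |Υu t - Υv t|) := by
  obtain ⟨⟨ha₀, ha₁⟩, -⟩ := hΥu t ⟨ht.1, ht.2.trans (min_le_left _ _)⟩
  have hM : Real.exp ‖v‖ ≤ Real.exp (max ‖u‖ ‖v‖) := Real.exp_le_exp.2 (le_max_right _ _)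
  calc |Fu xs hxs.le u (Υu t) - Fu xs hxs.le v (Υv t)|
      ≤ |Fu xs hxs.le u (Υu t) - Fu xs hxs.le v (Υu t)|
          + |Fu xs hxs.le v (Υu t) - Fu xs hxs.le v (Υv t)| := abs_sub_le _ _ _
    _ ≤ Real.exp (max ‖u‖ ‖v‖) * ‖u - v‖ * |Υu t| + Real.exp ‖v‖ * |Υu t - Υv t| :=
        add_le_add (abs_Fu_sub_Fu_le _ u v _) (abs_Fu_sub_Fu_le_mul_abs_sub _ v _ _)
    _ ≤ Real.exp (max ‖u‖ ‖v‖) * ‖u - v‖ * xs + Real.exp (max ‖u‖ ‖v‖) * |Υu t - Υv t| := by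
        rw [abs_of_nonneg ha₀]
        gcongr
    _ = Real.exp (max ‖u‖ ‖v‖) * (xs * ‖u - v‖ + |Υu t - Υv t|) := by ring

/-- for every `t ∈ [0, min(τ*_u, τ*_v)]`,
`|F_u(Υ^u(t)) - F_v(Υ^v(t))| ≤ M_{u,v}·(x*·‖u-v‖ + |Υ^u(t) - Υ^v(t)|)`. -/
theorem stmt_9 (xs : ℝ) (hxs : 0 < xs) (u v : C(Icc (0:ℝ) xs, ℝ)) (Υu Υv : ℝ → ℝ)
    (hΥu : ∀ s ∈ Icc (0:ℝ) (tau xs hxs.le u), Υu s ∈ Icc 0 xs ∧ Wu xs hxs.le u (Υu s) = s)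
    (hΥv : ∀ s ∈ Icc (0:ℝ) (tau xs hxs.le v), Υv s ∈ Icc 0 xs ∧ Wu xs hxs.le v (Υv s) = s)
    (t : ℝ) (ht : t ∈ Icc (0:ℝ) (min (tau xs hxs.le u) (tau xs hxs.le v))) :
    |Fu xs hxs.le u (Υu t) - Fu xs hxs.le v (Υv t)| ≤
      Real.exp (max ‖u‖ ‖v‖) * (xs * ‖u - v‖ + |Υu t - Υv t|) :=
  stmt_9_general xs hxs u v Υu Υv hΥu t ht
end
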